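/- arXiv:math/0611821 — 7 statements merged into one kernel-verified Lean document; each statement's English description precedes it below -/
import Mathlib

section
/- Let G be a group and M a G-set. A G-set X admits an injective G-equivariant map into the n-fold iterated power G-set P^n(M) for some n ≥ 1 if and only if the cardinality of X is strictly less than χ(M) := sup{card P^n(M) : n ≥ 0} and the kernel G_M = {g ∈ G : ∀ m ∈ M, g • m = m} of the action on M is contained in the kernel G_X = {g ∈ G : ∀ x ∈ X, g • x = x} of the action on X. -/
open Pointwise

universe u v

/-- The `n`-fold iterated power set `P^n(M)`, with `P^0(M) = M`. -/
def PowIter (M : Type u) : ℕ → Type u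
  | 0 => M
  | n + 1 => Set (PowIter M n)

/-- The `G`-action on `P^n(M)` obtained by iterating the pointwise action on power sets. -/
instance PowIter.instMulAction (G : Type v) [Group G] (M : Type u) [MulAction G M] :
    ∀ n, MulAction G (PowIter M n)
  | 0 => inferInstanceAs (MulAction G M)
  | n + 1 =>
    letI := PowIter.instMulAction G M n
    inferInstanceAs (MulAction G (Set (PowIter M n)))

namespace PowAux

variable {G : Type v} [Group G] {M : Type u} [MulAction G M]

/-- Elements of the kernel of the action on `M` fix every iterated power set pointwise. -/
lemma kernel_fixes {g : G} (hg : ∀ m : M, g • m = m) : ∀ (n : ℕ) (y : PowIter M n), g • y = y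
  | 0, y => hg y
  | n+1, S => by
    have hS : ∀ S' : Set (PowIter M n), g • S' = S' := by
      intro S'
      refine Set.ext fun z => ⟨?_, ?_⟩
      · rintro ⟨w, hw, rfl⟩
        show g • w ∈ S'
        rwa [kernel_fixes hg n w]
      · intro hz
        exact ⟨z, hz, kernel_fixes hg n z⟩
    exact hS S

/-- The iterated singleton map `M → P^k(M)`. -/
def upM (M : Type u) : ∀ k, M → PowIter M k
  | 0 => fun m => m
  | k+1 => fun m => ({upM M k m} : Set (PowIter M k))

lemma upM_injective : ∀ k, Function.Injective (upM M k)
  | 0 => fun _ _ h => h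
  | k+1 => fun a b h => upM_injective k (by
      have h' : ({upM M k a} : Set (PowIter M k)) = {upM M k b} := h
      exact Set.singleton_eq_singleton_iff.mp h')

lemma upM_equivariant (g : G) : ∀ k (m : M), upM M k (g • m) = g • upM M k m
  | 0, _ => rfl
  | k+1, m => by
    show ({upM M k (g • m)} : Set (PowIter M k)) = g • ({upM M k m} : Set (PowIter M k))
    rw [Set.smul_set_singleton, upM_equivariant g k m]

lemma mk_le_succ (n : ℕ) : Cardinal.mk (PowIter M n) ≤ Cardinal.mk (PowIter M (n+1)) :=
  Cardinal.mk_le_of_injective (f := fun y => ({y} : Set (PowIter M n)))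
    (fun _ _ h => Set.singleton_eq_singleton_iff.mp h)

lemma mk_mono {i j : ℕ} (h : i ≤ j) :
    Cardinal.mk (PowIter M i) ≤ Cardinal.mk (PowIter M j) := by
  induction j, h using Nat.le_induction with
  | base => exact le_rfl
  | succ n hn ih => exact ih.trans (mk_le_succ n)

/-- Kuratowski pairs. -/
def kpair {α : Type u} (a b : α) : Set (Set α) := {{a}, {a, b}}

lemma kpair_inj {α : Type u} {a b c d : α} (h : kpair a b = kpair c d) : a = c ∧ b = d := by
  rcases Set.pair_eq_pair_iff.mp h with ⟨h1, h2⟩ | ⟨h1, h2⟩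
  · have hac : a = c := Set.singleton_eq_singleton_iff.mp h1
    rcases Set.pair_eq_pair_iff.mp h2 with ⟨_, hbd⟩ | ⟨had, hbc⟩
    · exact ⟨hac, hbd⟩
    · exact ⟨hac, hbc.trans (hac.symm.trans had)⟩
  · have hca : c = a := by
      have : c ∈ ({a} : Set α) := by rw [h1]; exact Set.mem_insert _ _
      simpa using this
    have hda : d = a := by
      have : d ∈ ({a} : Set α) := by rw [h1]; exact Set.mem_insert_of_mem _ rfl
      simpa using this
    have hba : b = c := by
      have : b ∈ ({c} : Set α) := by rw [← h2]; exact Set.mem_insert_of_mem _ rfl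
      simpa using this
    exact ⟨hca.symm, (hba.trans hca).trans hda.symm⟩

lemma kpair_injective {α : Type u} : Function.Injective (fun p : α × α => kpair p.1 p.2) := by
  rintro ⟨a, b⟩ ⟨c, d⟩ h
  obtain ⟨h1, h2⟩ := kpair_inj h
  exact Prod.ext h1 h2

/-- The graph of a self-map, as a set of pairs. -/
def graphOf (φ : M → M) : Set (M × M) := {p | p.2 = φ p.1}

lemma graphOf_injective : Function.Injective (graphOf (M := M)) := by
  intro φ ψ h
  funext m
  have hm : (m, φ m) ∈ graphOf φ := rfl
  rw [h] at hm
  exact hm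

section Orbits

variable (G M)

/-- The orbit equivalence relation on `P^K(M)`. -/
def orbSetoid (K : ℕ) : Setoid (PowIter M K) where
  r y z := ∃ g : G, g • y = z
  iseqv := by
    refine ⟨fun y => ⟨1, one_smul _ _⟩, ?_, ?_⟩
    · rintro y z ⟨g, rfl⟩; exact ⟨g⁻¹, inv_smul_smul g y⟩
    · rintro x y z ⟨g, rfl⟩ ⟨g', rfl⟩; exact ⟨g' * g, mul_smul g' g x⟩

/-- The set of orbits of `P^K(M)`. -/
def OrbQ (K : ℕ) : Type u := Quotient (orbSetoid G M K)

/-- The carrier of an orbit, a `G`-fixed subset of `P^K(M)`. -/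
def carrier (K : ℕ) (q : OrbQ G M K) : Set (PowIter M K) :=
  {y | Quotient.mk (orbSetoid G M K) y = q}

lemma carrier_injective (K : ℕ) : Function.Injective (carrier G M K) := by
  intro q q' h
  have hy : (Quotient.out q) ∈ carrier G M K q := Quotient.out_eq q
  rw [h] at hy
  exact (Quotient.out_eq q).symm.trans hy

lemma carrier_smul_fixed (K : ℕ) (g : G) (q : OrbQ G M K) :
    g • carrier G M K q = carrier G M K q := by
  refine Set.ext fun z => ⟨?_, ?_⟩
  · rintro ⟨w, hw, rfl⟩
    show Quotient.mk (orbSetoid G M K) (g • w) = q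
    rw [← hw]
    exact Quotient.sound ⟨g⁻¹, inv_smul_smul g w⟩
  · intro hz
    refine ⟨g⁻¹ • z, ?_, smul_inv_smul g z⟩
    show Quotient.mk (orbSetoid G M K) (g⁻¹ • z) = q
    rw [← hz]
    exact Quotient.sound ⟨g, smul_inv_smul g z⟩

lemma exists_transporter (K : ℕ) (y : PowIter M K) :
    ∃ g : G, g • (Quotient.mk (orbSetoid G M K) y).out = y :=
  Quotient.exact (Quotient.out_eq (Quotient.mk (orbSetoid G M K) y))

/-- An injection of `P^K(M)` into (orbits) × (self-maps of `M`). -/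
noncomputable def psi (K : ℕ) : PowIter M K → (OrbQ G M K) × (M → M) :=
  fun y => (Quotient.mk (orbSetoid G M K) y,
    fun m => Classical.choose (exists_transporter G M K y) • m)

lemma psi_injective (K : ℕ) : Function.Injective (psi G M K) := by
  intro y z h
  have h1 : Quotient.mk (orbSetoid G M K) y = Quotient.mk (orbSetoid G M K) z :=
    congrArg Prod.fst h
  have h2 := congrArg Prod.snd h
  have hy := Classical.choose_spec (exists_transporter G M K y)
  have hz := Classical.choose_spec (exists_transporter G M K z)
  set gy := Classical.choose (exists_transporter G M K y)
  set gz := Classical.choose (exists_transporter G M K z)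
  have hsm : ∀ m : M, (gz⁻¹ * gy) • m = m := by
    intro m
    have hm : gy • m = gz • m := congrFun h2 m
    rw [mul_smul, hm, inv_smul_smul]
  have hfix := kernel_fixes hsm K ((Quotient.mk (orbSetoid G M K) z).out)
  rw [mul_smul] at hfix
  rw [← hy, ← hz, h1]
  calc gy • (Quotient.mk (orbSetoid G M K) z).out
      = gz • (gz⁻¹ • (gy • (Quotient.mk (orbSetoid G M K) z).out)) := (smul_inv_smul _ _).symm
    _ = gz • (Quotient.mk (orbSetoid G M K) z).out := by rw [hfix]

lemma mk_le_orbQ (K : ℕ) :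
    Cardinal.mk (PowIter M K) ≤ Cardinal.mk ((OrbQ G M K) × (M → M)) :=
  Cardinal.mk_le_of_injective (psi_injective G M K)

/-- Any type of size at most `P^a(M)` injects into the set of orbits of `P^(a+3)(M)`. -/
lemma le_orbQ_of_small (a : ℕ) (ha : 3 ≤ a) (S : Type u)
    (hS : Cardinal.mk S ≤ Cardinal.mk (PowIter M a)) :
    Cardinal.mk S ≤ Cardinal.mk (OrbQ G M (a + 3)) := by
  have hF : Cardinal.mk (M → M) ≤ Cardinal.mk (PowIter M a) := by
    have h1 : Cardinal.mk (M → M) ≤ Cardinal.mk (Set (M × M)) :=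
      Cardinal.mk_le_of_injective graphOf_injective
    have h2 : Cardinal.mk (Set (M × M)) ≤ Cardinal.mk (Set (Set (Set M))) :=
      Cardinal.mk_le_of_injective (Set.image_injective.mpr kpair_injective)
    exact h1.trans (h2.trans (mk_mono ha))
  have hprod : ∀ T : Type u, Cardinal.mk T ≤ Cardinal.mk (PowIter M a) →
      Cardinal.mk (T × (M → M)) < Cardinal.mk (PowIter M (a + 3)) := by
    intro T hT
    obtain ⟨e1⟩ := (Cardinal.le_def _ _).mp hT
    obtain ⟨e2⟩ := (Cardinal.le_def _ _).mp hF
    have h3 : Cardinal.mk (T × (M → M)) ≤ Cardinal.mk (PowIter M a × PowIter M a) :=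
      Cardinal.mk_le_of_injective (e1.prodMap e2).injective
    have h4 : Cardinal.mk (PowIter M a × PowIter M a) ≤
        Cardinal.mk (Set (Set (PowIter M a))) :=
      Cardinal.mk_le_of_injective kpair_injective
    have h5 : Cardinal.mk (PowIter M (a + 2)) < Cardinal.mk (PowIter M (a + 3)) := by
      have hc := Cardinal.cantor (Cardinal.mk (PowIter M (a + 2)))
      rw [← Cardinal.mk_set] at hc
      exact hc
    exact (h3.trans h4).trans_lt h5
  rcases le_total (Cardinal.mk (OrbQ G M (a + 3))) (Cardinal.mk S) with h | h
  · exfalso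
    obtain ⟨e⟩ := (Cardinal.le_def _ _).mp h
    have h6 : Cardinal.mk ((OrbQ G M (a + 3)) × (M → M)) ≤ Cardinal.mk (S × (M → M)) :=
      Cardinal.mk_le_of_injective (e.prodMap (Function.Embedding.refl _)).injective
    exact lt_irrefl _ (((mk_le_orbQ G M (a + 3)).trans h6).trans_lt (hprod S hS))
  · exact h

end Orbits

section Construct

variable {X : Type u} [MulAction G X] (K : ℕ)

/-- The auxiliary sum type `(M × M) ⊕ P^(K+1)(M)`. -/
def Wt (M : Type u) (K : ℕ) : Type u := (M × M) ⊕ (Set (PowIter M K))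

/-- The relevant `G`-action on `Wt`: trivial on the first factor of `M × M`. -/
def aW (g : G) : Wt M K → Wt M K :=
  Sum.elim (fun p => Sum.inl (p.1, g • p.2)) (fun t => Sum.inr (g • t))

/-- An equivariant injective coding of `Wt` into `P^(K+3)(M)`. -/
def uMap (d : M → Set (PowIter M K)) : Wt M K → Set (Set (Set (PowIter M K))) :=
  Sum.elim (fun p => kpair (d p.1) (upM M (K+1) p.2 : Set (PowIter M K)))
    (fun t => {∅, {t}, Set.univ})

/-- The coded graph of the action of `g`, together with a color recording `g⁻¹ • x`. -/
def EMap (c : X → Set (PowIter M K)) (g : G) (x : X) : Set (Wt M K) :=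
  {w | (∃ m : M, w = Sum.inl (m, g • m)) ∨ w = Sum.inr (c (g⁻¹ • x))}

/-- The final equivariant injection of `X` into an iterated power set. -/
def FMap (c : X → Set (PowIter M K)) (d : M → Set (PowIter M K)) (x : X) :
    Set (Set (Set (Set (Set (PowIter M K))))) :=
  {A | ∃ g : G, A = uMap K d '' EMap K c g x}

variable {K}

lemma uMap_injective {d : M → Set (PowIter M K)} (hdinj : Function.Injective d)
    (hne : Nonempty (PowIter M K)) : Function.Injective (uMap K d) := by
  have hsne : ∀ t : Set (PowIter M K), ({t} : Set (Set (PowIter M K))) ≠ Set.univ := by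
    intro t ht
    obtain ⟨y⟩ := hne
    have h1 : (∅ : Set (PowIter M K)) ∈ ({t} : Set (Set (PowIter M K))) := ht ▸ trivial
    have h2 : (Set.univ : Set (PowIter M K)) ∈ ({t} : Set (Set (PowIter M K))) := ht ▸ trivial
    have h3 : (∅ : Set (PowIter M K)) = Set.univ :=
      (Set.mem_singleton_iff.mp h1).trans (Set.mem_singleton_iff.mp h2).symm
    exact absurd (h3 ▸ (Set.mem_univ y)) (Set.notMem_empty y)
  have hemp : ∀ (A B : Set (PowIter M K)) (t : Set (PowIter M K)),
      kpair A B ≠ ({∅, {t}, Set.univ} : Set (Set (Set (PowIter M K)))) := by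
    intro A B t h
    have h1 : (∅ : Set (Set (PowIter M K))) ∈ kpair A B := by
      rw [h]; exact Set.mem_insert _ _
    rcases h1 with h1 | h1
    · exact Set.singleton_ne_empty A h1.symm
    · exact (Set.insert_nonempty A {B}).ne_empty h1.symm
  intro w w' h
  rcases w with p | t <;> rcases w' with p' | t'
  · obtain ⟨h1, h2⟩ := kpair_inj h
    have hp1 : p.1 = p'.1 := hdinj h1
    have hp2 : p.2 = p'.2 := upM_injective (K+1) h2
    rw [Prod.ext hp1 hp2]
  · exact absurd h (hemp _ _ _)
  · exact absurd h.symm (hemp _ _ _)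
  · have h' : ({∅, {t}, Set.univ} : Set (Set (Set (PowIter M K)))) = {∅, {t'}, Set.univ} := h
    have h1 : ({t} : Set (Set (PowIter M K))) ∈
        ({∅, {t'}, Set.univ} : Set (Set (Set (PowIter M K)))) := by
      rw [← h']; exact Set.mem_insert_of_mem _ (Set.mem_insert _ _)
    rcases h1 with h1 | h1 | h1
    · exact absurd h1 (Set.singleton_ne_empty t)
    · rw [Set.singleton_eq_singleton_iff.mp h1]
    · exact absurd h1 (hsne t)

lemma uMap_smul {d : M → Set (PowIter M K)} (hdfix : ∀ (g : G) (m : M), g • d m = d m)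
    (g : G) (w : Wt M K) : g • uMap K d w = uMap K d (aW K g w) := by
  rcases w with p | t
  · show g • kpair (d p.1) (upM M (K+1) p.2 : Set (PowIter M K)) =
      kpair (d p.1) (upM M (K+1) (g • p.2) : Set (PowIter M K))
    unfold kpair
    rw [Set.smul_set_insert, Set.smul_set_singleton, Set.smul_set_singleton,
      Set.smul_set_insert]
    erw [Set.smul_set_singleton]
    rw [hdfix, upM_equivariant]
    rfl
  · show g • ({∅, {t}, Set.univ} : Set (Set (Set (PowIter M K)))) = {∅, {g • t}, Set.univ}
    rw [Set.smul_set_insert, Set.smul_set_insert, Set.smul_set_singleton,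
      Set.smul_set_empty, Set.smul_set_singleton, Set.smul_set_univ]

lemma aW_image {c : X → Set (PowIter M K)} (hcfix : ∀ (g : G) (x : X), g • c x = c x)
    (g h : G) (x : X) : aW K g '' EMap K c h x = EMap K c (g * h) (g • x) := by
  have hx : (g * h)⁻¹ • (g • x) = h⁻¹ • x := by
    rw [mul_inv_rev, mul_smul, inv_smul_smul]
  refine Set.ext fun w => ⟨?_, ?_⟩
  · rintro ⟨w₀, hw₀, rfl⟩
    rcases hw₀ with ⟨m, rfl⟩ | rfl
    · exact Or.inl ⟨m, by show Sum.inl (m, g • h • m) = _; rw [mul_smul]⟩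
    · refine Or.inr ?_
      show Sum.inr (g • c (h⁻¹ • x)) = Sum.inr (c ((g * h)⁻¹ • (g • x)))
      rw [hx, hcfix]
  · intro hw
    rcases hw with ⟨m, rfl⟩ | rfl
    · exact ⟨Sum.inl (m, h • m), Or.inl ⟨m, rfl⟩,
        by show Sum.inl (m, g • h • m) = _; rw [mul_smul]⟩
    · refine ⟨Sum.inr (c (h⁻¹ • x)), Or.inr rfl, ?_⟩
      show Sum.inr (g • c (h⁻¹ • x)) = Sum.inr (c ((g * h)⁻¹ • (g • x)))
      rw [hx, hcfix]

lemma smul_image_uMap {d : M → Set (PowIter M K)}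
    (hdfix : ∀ (g : G) (m : M), g • d m = d m) (g : G) (S : Set (Wt M K)) :
    g • (uMap K d '' S) = uMap K d '' (aW K g '' S) := by
  have h1 : g • (uMap K d '' S) = (fun A => g • A) '' (uMap K d '' S) := rfl
  rw [h1, Set.image_image, Set.image_image]
  exact Set.image_congr fun w _ => uMap_smul hdfix g w

lemma FMap_equivariant {c : X → Set (PowIter M K)} {d : M → Set (PowIter M K)}
    (hcfix : ∀ (g : G) (x : X), g • c x = c x)
    (hdfix : ∀ (g : G) (m : M), g • d m = d m) (g : G) (x : X) :
    FMap (G := G) K c d (g • x) = g • FMap (G := G) K c d x := by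
  refine Set.ext fun A => ⟨?_, ?_⟩
  · rintro ⟨h, rfl⟩
    refine ⟨uMap K d '' EMap K c (g⁻¹ * h) x, ⟨g⁻¹ * h, rfl⟩, ?_⟩
    show g • (uMap K d '' EMap K c (g⁻¹ * h) x) = uMap K d '' EMap K c h (g • x)
    rw [smul_image_uMap hdfix, aW_image hcfix, mul_inv_cancel_left]
  · rintro ⟨B, ⟨h, rfl⟩, rfl⟩
    refine ⟨g * h, ?_⟩
    show g • (uMap K d '' EMap K c h x) = uMap K d '' EMap K c (g * h) (g • x)
    rw [smul_image_uMap hdfix, aW_image hcfix]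

lemma FMap_injective {c : X → Set (PowIter M K)} {d : M → Set (PowIter M K)}
    (hcinj : Function.Injective c) (hcfix : ∀ (g : G) (x : X), g • c x = c x)
    (hdinj : Function.Injective d) (hne : Nonempty (PowIter M K))
    (hker : {g : G | ∀ m : M, g • m = m} ⊆ {g : G | ∀ x : X, g • x = x}) :
    Function.Injective (FMap (G := G) K c d) := by
  intro x y h
  have h1 : uMap K d '' EMap K c (1 : G) x ∈ FMap (G := G) K c d y := by
    rw [← h]; exact ⟨1, rfl⟩
  obtain ⟨g, hg⟩ := h1
  have hE : EMap K c (1 : G) x = EMap K c g y :=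
    Set.image_injective.mpr (uMap_injective hdinj hne) hg
  have hgM : ∀ m : M, g • m = m := by
    intro m
    have hm : (Sum.inl (m, g • m) : Wt M K) ∈ EMap K c g y := Or.inl ⟨m, rfl⟩
    rw [← hE] at hm
    rcases hm with ⟨m₀, hm₀⟩ | hm₀
    · have h2 : m = m₀ ∧ g • m = (1 : G) • m₀ := by
        have := Sum.inl.inj hm₀
        exact ⟨congrArg Prod.fst this, congrArg Prod.snd this⟩
      rw [h2.2, ← h2.1, one_smul]
    · exact absurd hm₀ (Sum.inl_ne_inr)
  have hgX : ∀ z : X, g • z = z := hker hgM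
  have hcxy : (Sum.inr (c ((1 : G)⁻¹ • x)) : Wt M K) ∈ EMap K c g y := by
    rw [← hE]; exact Or.inr rfl
  rcases hcxy with ⟨m₀, hm₀⟩ | hm₀
  · exact absurd hm₀.symm (Sum.inl_ne_inr)
  · have h3 : c ((1 : G)⁻¹ • x) = c (g⁻¹ • y) := Sum.inr.inj hm₀
    have h4 : g⁻¹ • y = y := by
      have hy := hgX y
      rw [← hy, inv_smul_smul, hy]
    rw [inv_one, one_smul, h4] at h3
    exact hcinj h3

end Construct

end PowAux

theorem subobject_of_iterated_power_iff
    (G : Type v) [Group G] (M : Type u) [MulAction G M] (X : Type u) [MulAction G X] :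
    (∃ n : ℕ, 1 ≤ n ∧ ∃ f : X → PowIter M n,
        Function.Injective f ∧ ∀ (g : G) (x : X), f (g • x) = g • f x) ↔
      (Cardinal.mk X < ⨆ n : ℕ, Cardinal.mk (PowIter M n)) ∧
        {g : G | ∀ m : M, g • m = m} ⊆ {g : G | ∀ x : X, g • x = x} := by
  classical
  constructor
  · rintro ⟨n, _, f, hinj, heq⟩
    refine ⟨?_, ?_⟩
    · have h1 : Cardinal.mk X ≤ Cardinal.mk (PowIter M n) := Cardinal.mk_le_of_injective hinj
      have h2 : Cardinal.mk (PowIter M n) < Cardinal.mk (PowIter M (n+1)) := by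
        have hc := Cardinal.cantor (Cardinal.mk (PowIter M n))
        rw [← Cardinal.mk_set] at hc
        exact hc
      exact (h1.trans_lt h2).trans_le
        (le_ciSup (Cardinal.bddAbove_range fun k => Cardinal.mk (PowIter M k)) (n+1))
    · intro g hg x
      exact hinj ((heq g x).trans (PowAux.kernel_fixes hg n (f x)))
  · rintro ⟨hcard, hker⟩
    obtain ⟨n, hn⟩ : ∃ n, Cardinal.mk X < Cardinal.mk (PowIter M n) := by
      by_contra h
      push_neg at h
      exact absurd hcard (not_lt.mpr (ciSup_le h))
    set a : ℕ := max n 3 with ha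
    have hXa : Cardinal.mk X ≤ Cardinal.mk (PowIter M a) :=
      hn.le.trans (PowAux.mk_mono (le_max_left n 3))
    have hMa : Cardinal.mk M ≤ Cardinal.mk (PowIter M a) :=
      PowAux.mk_mono (i := 0) (Nat.zero_le a)
    have hXQ : Cardinal.mk X ≤ Cardinal.mk (PowAux.OrbQ G M (a + 3)) :=
      PowAux.le_orbQ_of_small G M a (le_max_right n 3) X hXa
    have hMQ : Cardinal.mk M ≤ Cardinal.mk (PowAux.OrbQ G M (a + 3)) :=
      PowAux.le_orbQ_of_small G M a (le_max_right n 3) M hMa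
    obtain ⟨eX⟩ := (Cardinal.le_def _ _).mp hXQ
    obtain ⟨eM⟩ := (Cardinal.le_def _ _).mp hMQ
    set K : ℕ := a + 3 with hK
    set c : X → Set (PowIter M K) := fun x => PowAux.carrier G M K (eX x) with hc
    set d : M → Set (PowIter M K) := fun m => PowAux.carrier G M K (eM m) with hd
    have hcinj : Function.Injective c :=
      fun x y h => eX.injective (PowAux.carrier_injective G M K h)
    have hdinj : Function.Injective d :=
      fun x y h => eM.injective (PowAux.carrier_injective G M K h)
    have hcfix : ∀ (g : G) (x : X), g • c x = c x :=
      fun g x => PowAux.carrier_smul_fixed G M K g (eX x)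
    have hdfix : ∀ (g : G) (m : M), g • d m = d m :=
      fun g m => PowAux.carrier_smul_fixed G M K g (eM m)
    have hne : Nonempty (PowIter M K) := ⟨(∅ : Set (PowIter M (a + 2)))⟩
    refine ⟨K + 5, by omega, fun x => PowAux.FMap (G := G) K c d x, ?_, ?_⟩
    · exact PowAux.FMap_injective hcinj hcfix hdinj hne hker
    · intro g x
      exact PowAux.FMap_equivariant hcfix hdfix g x
end

section
/- Let G be a group, M a G-set, and X a G-set. If card X < χ(M) := sup{card P^n(M) : n ≥ 0} and the kernel G_M = {g ∈ G : ∀ m ∈ M, g • m = m} is contained in the kernel G_X = {g ∈ G : ∀ x ∈ X, g • x = x}, then there exists n ≥ 1 and an injective G-equivariant map from X into the n-fold iterated power G-set P^n(M). -/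
open Pointwise

universe u v

/-! ### Auxiliary definitions -/

/-- Kuratowski pairs. -/
def kpair {α : Type*} (a b : α) : Set (Set α) := {{a}, {a, b}}

/-- The rigid element: a well-ordering of `M`, coded as a set of Kuratowski pairs;
an element of `P^3(M)`. -/
def zrel (M : Type u) : Set (Set (Set M)) :=
  {p | ∃ a b : M, WellOrderingRel a b ∧ p = kpair a b}

/-- The set of `G`-fixed points of `P^m(M)`. -/
def FixSet (G : Type v) [Group G] (M : Type u) [MulAction G M] (m : ℕ) : Type u :=
  {y : PowIter M m // ∀ g : G, g • y = y}

/-- Singleton lift `P^n(M) → P^(n+1)(M)`. -/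
def plift1 {M : Type u} {n : ℕ} (y : PowIter M n) : PowIter M (n+1) :=
  ({y} : Set (PowIter M n))

/-- Iterated singleton lift. -/
def pliftK {M : Type u} {n : ℕ} : ∀ (k : ℕ), PowIter M n → PowIter M (n + k)
  | 0, y => y
  | k+1, y => plift1 (pliftK k y)

/-- Transport along an equality of levels. -/
def pcast {M : Type u} {a b : ℕ} (h : a = b) (y : PowIter M a) : PowIter M b := h ▸ y

section Lemmas

variable {G : Type v} [Group G] {M : Type u} [MulAction G M]

lemma kpair_inj {α : Type*} {a b c d : α} (h : kpair a b = kpair c d) : a = c ∧ b = d := by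
  have h' := Set.ext_iff.mp h
  simp only [kpair, Set.mem_insert_iff, Set.mem_singleton_iff] at h'
  have h1 := (h' {a}).mp (Or.inl rfl)
  have h2 := (h' {a, b}).mp (Or.inr rfl)
  have h4 := (h' {c, d}).mpr (Or.inr rfl)
  have hac : a = c := by
    rcases h1 with h1 | h1
    · exact (Set.singleton_eq_singleton_iff.mp h1)
    · have : c ∈ ({a} : Set α) := h1 ▸ (Set.mem_insert c {d})
      exact (Set.mem_singleton_iff.mp this).symm
  refine ⟨hac, ?_⟩
  subst hac
  rcases h2 with h2 | h2
  · have hb : b = a := by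
      have : b ∈ ({a} : Set α) := h2 ▸ (Set.mem_insert_iff.mpr (Or.inr rfl))
      exact this
    rcases h4 with h4 | h4
    · have : d ∈ ({a} : Set α) := h4.symm ▸ (Set.mem_insert_iff.mpr (Or.inr rfl))
      rw [hb, this]
    · have : d ∈ ({a, b} : Set α) := h4.symm ▸ (Set.mem_insert_iff.mpr (Or.inr rfl))
      rcases this with h | h
      · rw [hb, h]
      · exact h.symm ▸ rfl
  · have hb : b ∈ ({a, d} : Set α) := h2 ▸ (Set.mem_insert_iff.mpr (Or.inr rfl))
    rcases hb with hb | hb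
    · have hd : d ∈ ({a, b} : Set α) := h2.symm ▸ (Set.mem_insert_iff.mpr (Or.inr rfl))
      rcases hd with hd | hd
      · rw [hb, hd]
      · exact hd.symm
    · exact hb

lemma kpair_smul {α : Type u} [MulAction G α] (g : G) (a b : α) :
    (g • (kpair a b : Set (Set α)) : Set (Set α)) = kpair (g • a) (g • b) := by
  simp only [kpair, Set.smul_set_insert, Set.smul_set_singleton]

/-- If `g` fixes every element of `S`, it fixes `S`. -/
lemma smul_set_fix {α : Type u} [MulAction G α] {g : G} {S : Set α}
    (h : ∀ w ∈ S, g • w = w) : g • S = S := by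
  ext w
  constructor
  · rintro ⟨y, hy, rfl⟩
    show g • y ∈ S
    rwa [h y hy]
  · intro hw
    exact ⟨w, hw, h w hw⟩

/-- The kernel of the action on `M` acts trivially on every iterated power set. -/
lemma kernel_fixes : ∀ (n : ℕ) (g : G), (∀ m : M, g • m = m) → ∀ y : PowIter M n, g • y = y
  | 0, g, hg, y => hg y
  | n+1, g, hg, y => smul_set_fix (fun w _ => kernel_fixes n g hg w)

lemma plift1_smul {n : ℕ} (g : G) (y : PowIter M n) : g • plift1 y = plift1 (g • y) := by
  show (g • ({y} : Set (PowIter M n)) : Set (PowIter M n)) = {g • y}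
  exact Set.smul_set_singleton

lemma plift1_inj {n : ℕ} : Function.Injective (plift1 (M := M) (n := n)) := by
  intro a b h
  exact Set.singleton_eq_singleton_iff.mp h

lemma pliftK_smul {n : ℕ} : ∀ (k : ℕ) (g : G) (y : PowIter M n),
    g • pliftK k y = pliftK k (g • y)
  | 0, g, y => rfl
  | k+1, g, y => by
    show g • plift1 (pliftK k y) = plift1 (pliftK k (g • y))
    rw [plift1_smul, pliftK_smul k]

lemma pliftK_inj {n : ℕ} : ∀ (k : ℕ), Function.Injective (pliftK (M := M) (n := n) k)
  | 0 => fun a b h => h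
  | k+1 => fun a b h => pliftK_inj k (plift1_inj h)

lemma pcast_smul {a b : ℕ} (h : a = b) (g : G) (y : PowIter M a) :
    pcast h (g • y) = g • pcast (M := M) h y := by subst h; rfl

lemma pcast_inj {a b : ℕ} (h : a = b) : Function.Injective (pcast (M := M) h) := by
  subst h; exact fun x y hxy => hxy

lemma mk_powIter_mono {a b : ℕ} (h : a ≤ b) :
    Cardinal.mk (PowIter M a) ≤ Cardinal.mk (PowIter M b) := by
  obtain ⟨k, rfl⟩ := Nat.le.dest h
  exact Cardinal.mk_le_of_injective (pliftK_inj (M := M) k)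

/-- A self-equivalence of a type preserving the well-ordering relation is the identity. -/
lemma wellorder_rigid {α : Type u} (f : α ≃ α)
    (hf : ∀ a b : α, WellOrderingRel (f a) (f b) ↔ WellOrderingRel a b) (a : α) : f a = a := by
  let φ : WellOrderingRel (α := α) ≃r WellOrderingRel (α := α) := ⟨f, hf _ _⟩
  have := InitialSeg.eq_relIso (InitialSeg.refl (WellOrderingRel (α := α))) φ a
  have h2 : φ a = a := by simpa using this
  exact h2

/-- The stabilizer of `zrel M` in `P^3(M)` is exactly the kernel of the action on `M`. -/
lemma zrel_spec (g : G) :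
    g • (zrel M : PowIter M 3) = (zrel M : PowIter M 3) ↔ ∀ m : M, g • m = m := by
  constructor
  · intro h
    have h' : (g • zrel M : Set (Set (Set M))) = zrel M := h
    have claim1 : ∀ a b : M, WellOrderingRel a b → WellOrderingRel (g • a) (g • b) := by
      intro a b hab
      have hmem : kpair (g • a) (g • b) ∈ (g • zrel M : Set (Set (Set M))) := by
        refine ⟨kpair a b, ⟨a, b, hab, rfl⟩, ?_⟩
        exact kpair_smul g a b
      rw [h'] at hmem
      obtain ⟨a', b', hr, heq⟩ := hmem
      obtain ⟨ha, hb⟩ := kpair_inj heq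
      rwa [ha, hb]
    have claim2 : ∀ a b : M, WellOrderingRel (g • a) (g • b) → WellOrderingRel a b := by
      intro a b hab
      have hmem : kpair (g • a) (g • b) ∈ (g • zrel M : Set (Set (Set M))) := by
        rw [h']; exact ⟨g • a, g • b, hab, rfl⟩
      obtain ⟨p, hp, hgp⟩ := hmem
      obtain ⟨a', b', hr, rfl⟩ := hp
      have hgp' : kpair (g • a') (g • b') = kpair (g • a) (g • b) :=
        (kpair_smul g a' b').symm.trans hgp
      obtain ⟨ha, hb⟩ := kpair_inj hgp'
      have ha' : a = a' := smul_left_cancel g ha.symm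
      have hb' : b = b' := smul_left_cancel g hb.symm
      rwa [ha', hb']
    intro m
    exact wellorder_rigid (MulAction.toPerm g) (fun a b => ⟨claim2 a b, claim1 a b⟩) m
  · intro h
    show (g • zrel M : Set (Set (Set M))) = zrel M
    refine smul_set_fix ?_
    rintro p ⟨a, b, hab, rfl⟩
    rw [show (g • kpair a b : Set (Set M)) = kpair (g • a) (g • b) from kpair_smul g a b,
      h a, h b]

/-- Every orbit in an iterated power set has cardinality at most that of `P^3(M)`. -/
lemma orbit_card_le (n : ℕ) (y : PowIter M n) :
    Cardinal.mk (MulAction.orbit G y) ≤ Cardinal.mk (PowIter M 3) := by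
  classical
  set z : PowIter M 3 := zrel M with hz
  have hsurj : ∃ φ : MulAction.orbit G z → MulAction.orbit G y, Function.Surjective φ := by
    refine ⟨fun w => ⟨(MulAction.mem_orbit_iff.mp w.2).choose • y, MulAction.mem_orbit _ _⟩, ?_⟩
    rintro ⟨v, hv⟩
    obtain ⟨u, rfl⟩ := MulAction.mem_orbit_iff.mp hv
    refine ⟨⟨u • z, MulAction.mem_orbit _ _⟩, ?_⟩
    have hc := (MulAction.mem_orbit_iff.mp
      (⟨u • z, MulAction.mem_orbit z u⟩ : MulAction.orbit G z).2).choose_spec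
    set c := (MulAction.mem_orbit_iff.mp
      (⟨u • z, MulAction.mem_orbit z u⟩ : MulAction.orbit G z).2).choose
    have hkerc : ∀ m : M, (u⁻¹ * c) • m = m := by
      refine (zrel_spec (u⁻¹ * c)).mp ?_
      rw [mul_smul]
      show u⁻¹ • c • z = z
      rw [hc]
      exact inv_smul_smul u z
    have hy : (u⁻¹ * c) • y = y := kernel_fixes n _ hkerc y
    have hcy : c • y = u • y := by
      have := congrArg (u • ·) hy
      simpa [mul_smul] using this
    exact Subtype.ext hcy
  obtain ⟨φ, hφ⟩ := hsurj
  exact (Cardinal.mk_le_of_surjective hφ).trans (Cardinal.mk_set_le _)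

lemma two_pow_orbits_le_fix (m : ℕ) :
    (2 : Cardinal.{u}) ^ Cardinal.mk (MulAction.orbitRel.Quotient G (PowIter M m))
      ≤ Cardinal.mk (FixSet G M (m+1)) := by
  rw [← Cardinal.mk_set]
  refine Cardinal.mk_le_of_injective (f := fun Q =>
    (⟨{y : PowIter M m | (⟦y⟧ : MulAction.orbitRel.Quotient G (PowIter M m)) ∈ Q}, ?_⟩ :
      FixSet G M (m+1))) ?_
  · intro g
    show (g • _ : Set (PowIter M m)) = _
    ext w
    constructor
    · rintro ⟨y, hy, rfl⟩
      show (⟦g • y⟧ : MulAction.orbitRel.Quotient G (PowIter M m)) ∈ Q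
      rwa [show (⟦g • y⟧ : MulAction.orbitRel.Quotient G (PowIter M m)) = ⟦y⟧ from
        Quotient.sound (MulAction.mem_orbit y g)]
    · intro hw
      refine ⟨g⁻¹ • w, ?_, smul_inv_smul g w⟩
      show (⟦g⁻¹ • w⟧ : MulAction.orbitRel.Quotient G (PowIter M m)) ∈ Q
      rwa [show (⟦g⁻¹ • w⟧ : MulAction.orbitRel.Quotient G (PowIter M m)) = ⟦w⟧ from
        Quotient.sound (MulAction.mem_orbit w g⁻¹)]
  · intro Q Q' h
    have h' := congrArg Subtype.val h
    simp only at h'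
    ext q
    obtain ⟨y, rfl⟩ := Quotient.exists_rep q
    exact Set.ext_iff.mp h' y

/-- Any cardinal below `χ(M)` is dominated by the set of fixed points of some `P^m(M)`. -/
lemma exists_fix_card (κ : Cardinal.{u})
    (hκ : κ < ⨆ k : ℕ, Cardinal.mk (PowIter M k)) :
    ∃ m : ℕ, κ ≤ Cardinal.mk (FixSet G M m) := by
  classical
  obtain ⟨n, hn⟩ : ∃ n : ℕ, κ ≤ Cardinal.mk (PowIter M n) := by
    by_contra hcon
    push_neg at hcon
    exact absurd (ciSup_le' fun k => (hcon k).le) (not_le.mpr hκ)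
  by_cases hfin : Finite M
  · have hforall : ∀ k : ℕ, Finite (PowIter M k) := by
      intro k
      induction k with
      | zero => exact hfin
      | succ k ih => show Finite (Set (PowIter M k)); infer_instance
    have hκfin : κ < Cardinal.aleph0 :=
      hn.trans_lt (Cardinal.mk_lt_aleph0_iff.mpr (hforall n))
    obtain ⟨k, rfl⟩ := Cardinal.lt_aleph0.mp hκfin
    clear hn hκ hκfin
    induction k with
    | zero => exact ⟨0, by simp⟩
    | succ k ih =>
      obtain ⟨m, hm⟩ := ih
      refine ⟨m + 1, ?_⟩
      have step : (2 : Cardinal.{u}) ^ Cardinal.mk (FixSet G M m)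
          ≤ Cardinal.mk (FixSet G M (m+1)) := by
        rw [← Cardinal.mk_set]
        refine Cardinal.mk_le_of_injective (f := fun Q =>
          (⟨Subtype.val '' Q, ?_⟩ : FixSet G M (m+1))) ?_
        · intro g
          refine smul_set_fix ?_
          rintro w ⟨y, _, rfl⟩
          exact y.2 g
        · intro Q Q' h
          have h' := congrArg Subtype.val h
          exact Set.image_injective.mpr Subtype.val_injective h'
      calc ((k + 1 : ℕ) : Cardinal.{u}) ≤ ((2 ^ k : ℕ) : Cardinal.{u}) := by
            exact_mod_cast Nat.lt_two_pow_self (n := k)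
        _ = (2 : Cardinal.{u}) ^ (k : Cardinal.{u}) := by push_cast; rfl
        _ ≤ (2 : Cardinal.{u}) ^ Cardinal.mk (FixSet G M m) :=
            Cardinal.power_le_power_left (by norm_num) hm
        _ ≤ _ := step
  · have : Infinite M := not_finite_iff_infinite.mp hfin
    set γ := Cardinal.mk (PowIter M 3) with hγdef
    have hγ : Cardinal.aleph0 ≤ γ :=
      (Cardinal.aleph0_le_mk M).trans (mk_powIter_mono (Nat.zero_le 3))
    set ℓ := n + 4 with hℓ
    have h4ℓ : Cardinal.mk (PowIter M 4) ≤ Cardinal.mk (PowIter M ℓ) :=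
      mk_powIter_mono (by omega)
    have hcant : γ < Cardinal.mk (PowIter M 4) := by
      have h45 : Cardinal.mk (PowIter M 4) = 2 ^ γ := Cardinal.mk_set
      rw [h45]
      exact Cardinal.cantor γ
    set q := Cardinal.mk (MulAction.orbitRel.Quotient G (PowIter M ℓ)) with hq
    have key : Cardinal.mk (PowIter M ℓ) ≤ q * γ := by
      have e := Cardinal.mk_congr (MulAction.selfEquivSigmaOrbits G (PowIter M ℓ))
      rw [e, Cardinal.mk_sigma]
      calc (Cardinal.sum fun ω : MulAction.orbitRel.Quotient G (PowIter M ℓ) =>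
            Cardinal.mk (MulAction.orbit G ω.out))
          ≤ Cardinal.sum fun _ : MulAction.orbitRel.Quotient G (PowIter M ℓ) => γ :=
            Cardinal.sum_le_sum _ _ fun ω => orbit_card_le ℓ ω.out
        _ = q * γ := Cardinal.sum_const' _ _
    have hqγ : γ ≤ q := by
      by_contra hcon
      push_neg at hcon
      have hle : Cardinal.mk (PowIter M ℓ) ≤ γ := by
        calc Cardinal.mk (PowIter M ℓ) ≤ q * γ := key
          _ ≤ γ * γ := mul_le_mul' hcon.le le_rfl
          _ = γ := Cardinal.mul_eq_self hγ
      exact absurd ((hcant.trans_le h4ℓ).trans_le hle) (lt_irrefl γ)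
    have hqinf : Cardinal.aleph0 ≤ q := hγ.trans hqγ
    have hℓq : Cardinal.mk (PowIter M ℓ) ≤ q := by
      calc Cardinal.mk (PowIter M ℓ) ≤ q * γ := key
        _ ≤ q * q := mul_le_mul' le_rfl hqγ
        _ = q := Cardinal.mul_eq_self hqinf
    refine ⟨ℓ + 1, ?_⟩
    calc κ ≤ Cardinal.mk (PowIter M n) := hn
      _ ≤ Cardinal.mk (PowIter M ℓ) := mk_powIter_mono (by omega)
      _ ≤ q := hℓq
      _ ≤ 2 ^ q := (Cardinal.cantor q).le
      _ ≤ Cardinal.mk (FixSet G M (ℓ+1)) := two_pow_orbits_le_fix ℓ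

end Lemmas

section Maps

variable {G : Type v} [Group G] {M : Type u} [MulAction G M] {X : Type u} [MulAction G X]

/-- The orbit-wise embedding into `P^(3+ℓ+1)(M)`. -/
def Emap (ℓ : ℕ) (z' : PowIter M (3 + ℓ)) (x : X) : Set (PowIter M (3 + ℓ)) :=
  {w | ∃ u : G, u • (⟦x⟧ : MulAction.orbitRel.Quotient G X).out = x ∧ w = u • z'}

/-- The fixed-point tag map. -/
def Tmap (ℓ : ℕ) (τ : MulAction.orbitRel.Quotient G X ↪ FixSet G M ℓ) (x : X) :
    PowIter M (3 + ℓ + 1) :=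
  pcast (by omega : ℓ + 4 = 3 + ℓ + 1) (pliftK 4 (τ ⟦x⟧).val)

lemma quot_smul (g : G) (x : X) :
    (⟦g • x⟧ : MulAction.orbitRel.Quotient G X) = ⟦x⟧ :=
  Quotient.sound (MulAction.mem_orbit x g)

lemma Tmap_fix (ℓ : ℕ) (τ : MulAction.orbitRel.Quotient G X ↪ FixSet G M ℓ) (g : G) (x : X) :
    g • Tmap ℓ τ x = Tmap ℓ τ x := by
  unfold Tmap
  rw [← pcast_smul, pliftK_smul, (τ ⟦x⟧).2 g]

lemma Tmap_smulx (ℓ : ℕ) (τ : MulAction.orbitRel.Quotient G X ↪ FixSet G M ℓ) (g : G) (x : X) :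
    Tmap ℓ τ (g • x) = Tmap ℓ τ x := by
  unfold Tmap
  rw [quot_smul]

lemma Tmap_inj (ℓ : ℕ) (τ : MulAction.orbitRel.Quotient G X ↪ FixSet G M ℓ) {x x' : X}
    (h : Tmap ℓ τ x = Tmap ℓ τ x') :
    (⟦x⟧ : MulAction.orbitRel.Quotient G X) = ⟦x'⟧ := by
  unfold Tmap at h
  exact τ.injective (Subtype.ext (pliftK_inj 4 (pcast_inj _ h)))

lemma Emap_smul (ℓ : ℕ) (z' : PowIter M (3 + ℓ)) (g : G) (x : X) :
    (Emap (G := G) ℓ z' (g • x) : Set (PowIter M (3 + ℓ)))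
      = (g • Emap (G := G) ℓ z' x : Set (PowIter M (3 + ℓ))) := by
  ext w
  constructor
  · rintro ⟨u, hu, rfl⟩
    rw [quot_smul] at hu
    refine ⟨(g⁻¹ * u) • z', ⟨g⁻¹ * u, ?_, rfl⟩, ?_⟩
    · rw [mul_smul, hu, inv_smul_smul]
    · show g • ((g⁻¹ * u) • z') = u • z'
      rw [smul_smul, mul_inv_cancel_left]
  · rintro ⟨w', ⟨u, hu, rfl⟩, rfl⟩
    refine ⟨g * u, ?_, (mul_smul g u z').symm⟩
    rw [quot_smul, mul_smul, hu]

end Maps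

theorem sufficiency_of_card_and_kernel_conditions
    (G : Type v) [Group G] (M : Type u) [MulAction G M] (X : Type u) [MulAction G X]
    (hcard : Cardinal.mk X < ⨆ k : ℕ, Cardinal.mk (PowIter M k))
    (hker : {g : G | ∀ m : M, g • m = m} ⊆ {g : G | ∀ x : X, g • x = x}) :
    ∃ n : ℕ, 1 ≤ n ∧ ∃ f : X → PowIter M n,
      Function.Injective f ∧ ∀ (g : G) (x : X), f (g • x) = g • f x := by
  classical
  have hQle : Cardinal.mk (MulAction.orbitRel.Quotient G X) ≤ Cardinal.mk X :=
    Cardinal.mk_quotient_le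
  obtain ⟨ℓ, hℓ⟩ := exists_fix_card (G := G) (M := M) _ (hQle.trans_lt hcard)
  obtain ⟨τ⟩ := Cardinal.le_def _ _ |>.mp hℓ
  -- the rigid element, lifted to level 3 + ℓ
  set z' : PowIter M (3 + ℓ) := pliftK ℓ (zrel M : PowIter M 3) with hz'def
  have hz' : ∀ g : G, g • z' = z' ↔ ∀ m : M, g • m = m := by
    intro g
    constructor
    · intro h
      have h2 : pliftK (M := M) (n := 3) ℓ (g • (zrel M : PowIter M 3))
          = pliftK (M := M) (n := 3) ℓ (zrel M : PowIter M 3) := by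
        exact (pliftK_smul (n := 3) ℓ g (zrel M : PowIter M 3)).symm.trans h
      exact (zrel_spec g).mp (pliftK_inj ℓ h2)
    · intro h
      exact kernel_fixes _ g h z'
  have hout : ∀ x : X, ∃ u : G, u • (⟦x⟧ : MulAction.orbitRel.Quotient G X).out = x := by
    intro x
    have h : (⟦x⟧ : MulAction.orbitRel.Quotient G X).out ∈ MulAction.orbit G x :=
      Quotient.exact ((⟦x⟧ : MulAction.orbitRel.Quotient G X).out_eq)
    obtain ⟨u, hu⟩ := MulAction.mem_orbit_iff.mp h
    exact ⟨u⁻¹, by rw [← hu, inv_smul_smul]⟩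
  refine ⟨3 + ℓ + 1 + 2, by omega, fun x =>
    (show Set (Set (PowIter M (3 + ℓ + 1))) from
      kpair (Tmap ℓ τ x) (Emap (G := G) ℓ z' x)), ?_, ?_⟩
  · -- injectivity
    intro x x' hxx
    obtain ⟨hT, hE⟩ := kpair_inj
      (show kpair (α := PowIter M (3 + ℓ + 1)) (Tmap ℓ τ x) (Emap (G := G) ℓ z' x)
        = kpair (Tmap ℓ τ x') (Emap (G := G) ℓ z' x') from hxx)
    have hqq := Tmap_inj ℓ τ hT
    obtain ⟨u, hu⟩ := hout x
    have hmem : u • z' ∈ Emap (G := G) ℓ z' x := ⟨u, hu, rfl⟩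
    rw [show (Emap (G := G) ℓ z' x : PowIter M (3 + ℓ + 1))
      = Emap (G := G) ℓ z' x' from hE] at hmem
    obtain ⟨u', hu', heq⟩ := hmem
    have hstab : (u'⁻¹ * u) • z' = z' := by rw [mul_smul, heq, inv_smul_smul]
    have hX : ∀ y : X, (u'⁻¹ * u) • y = y := hker ((hz' _).mp hstab)
    have hoo : u • (⟦x⟧ : MulAction.orbitRel.Quotient G X).out
        = u' • (⟦x⟧ : MulAction.orbitRel.Quotient G X).out := by
      have h3 := congrArg (fun w => u' • w)
        (hX ((⟦x⟧ : MulAction.orbitRel.Quotient G X).out))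
      simp only [smul_smul, mul_inv_cancel_left] at h3
      exact h3
    calc x = u • (⟦x⟧ : MulAction.orbitRel.Quotient G X).out := hu.symm
      _ = u' • (⟦x⟧ : MulAction.orbitRel.Quotient G X).out := hoo
      _ = u' • (⟦x'⟧ : MulAction.orbitRel.Quotient G X).out := by rw [hqq]
      _ = x' := hu'
  · -- equivariance
    intro g x
    show (kpair (Tmap ℓ τ (g • x)) (Emap (G := G) ℓ z' (g • x))
        : Set (Set (PowIter M (3 + ℓ + 1))))
      = g • (kpair (Tmap ℓ τ x) (Emap (G := G) ℓ z' x) : Set (Set (PowIter M (3 + ℓ + 1))))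
    have e1 := kpair_smul (α := PowIter M (3 + ℓ + 1)) g (Tmap ℓ τ x) (Emap (G := G) ℓ z' x)
    have e2 : g • (Emap (G := G) ℓ z' x : PowIter M (3 + ℓ + 1)) = Emap (G := G) ℓ z' (g • x) :=
      (Emap_smul ℓ z' g x).symm
    have e3 := Tmap_fix ℓ τ g x
    have e4 := Tmap_smulx ℓ τ g x
    exact (congrArg₂ (kpair (α := PowIter M (3 + ℓ + 1))) (e4.trans e3.symm) e2.symm).trans e1.symm
end

section
/- Let G be a group, M a G-set, and let ≤ be a well-order (a linear order whose strict order is well-founded) on M. Let z ∈ P(P(M)) be the set of all lower sets of (M, ≤) (equivalently, all initial segments, including M itself). Then the stabilizer of z under the G-action on P(P(M)) equals the kernel G_M = {g ∈ G : ∀ m ∈ M, g • m = m} of the action of G on M. -/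
/-! An element of the stabilizer, and its inverse, send lower sets to lower sets, so `m ↦ g • m`
is an order automorphism of `M`; a well-order has no nontrivial automorphism. -/

open Pointwise

theorem Set.smul_set_eq_self_of_forall_smul_eq {G α : Type*} [SMul G α] {g : G}
    (hg : ∀ a : α, g • a = a) (s : Set α) : g • s = s := by
  rw [← Set.image_smul, funext hg, Set.image_id']

theorem Equiv.monotone_symm_of_isLowerSet_image {α β : Type*} [Preorder α] [Preorder β]
    (e : α ≃ β) (he : ∀ s : Set α, IsLowerSet s → IsLowerSet (e '' s)) : Monotone e.symm := by
  intro x y hxy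
  obtain ⟨z, hz, rfl⟩ :=
    he _ (isLowerSet_Iic (e.symm y)) hxy ⟨e.symm y, le_rfl, e.apply_symm_apply y⟩
  simpa using hz

theorem Equiv.Perm.eq_refl_of_isLowerSet_image {α : Type*} [LinearOrder α] [WellFoundedLT α]
    (e : Equiv.Perm α) (he : ∀ s : Set α, IsLowerSet s → IsLowerSet (e '' s))
    (he' : ∀ s : Set α, IsLowerSet s → IsLowerSet (e.symm '' s)) : e = Equiv.refl α :=
  congrArg RelIso.toEquiv <| Subsingleton.elim
    (e.toOrderIso (e.symm.monotone_symm_of_isLowerSet_image he')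
      (e.monotone_symm_of_isLowerSet_image he)) (OrderIso.refl α)

theorem IsLowerSet.smul_of_smul_lowerSets_eq {G α : Type*} [SMul G α] [Preorder α] {g : G}
    (hg : g • {s : Set α | IsLowerSet s} = {s : Set α | IsLowerSet s}) {s : Set α}
    (hs : IsLowerSet s) : IsLowerSet (g • s) := by
  have h : g • s ∈ g • {s : Set α | IsLowerSet s} := Set.smul_mem_smul_set hs
  rwa [hg] at h

theorem stabilizer_of_lowerSets_eq_kernel
    {G : Type*} [Group G] (M : Type*) [MulAction G M] [LinearOrder M]
    (hwf : WellFounded ((· < ·) : M → M → Prop)) :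
    {g : G | g • ({S : Set M | IsLowerSet S} : Set (Set M)) = {S : Set M | IsLowerSet S}} =
      {g : G | ∀ m : M, g • m = m} := by
  have : WellFoundedLT M := ⟨hwf⟩
  ext g
  refine ⟨fun hg m => ?_, fun hg => ?_⟩
  · have hg' : g⁻¹ • {S : Set M | IsLowerSet S} = {S : Set M | IsLowerSet S} := by
      rw [inv_smul_eq_iff, hg]
    have hid := (MulAction.toPerm g : Equiv.Perm M).eq_refl_of_isLowerSet_image
      (fun s hs => by simpa [Set.image_smul] using hs.smul_of_smul_lowerSets_eq hg)
      (fun s hs => by simpa [Set.image_smul] using hs.smul_of_smul_lowerSets_eq hg')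
    exact Equiv.congr_fun hid m
  · exact Set.smul_set_eq_self_of_forall_smul_eq (Set.smul_set_eq_self_of_forall_smul_eq hg) _
end

section
/- Let G be a group, M a G-set, and z ∈ P(P(M)) an element whose stabilizer under the G-action on P(P(M)) equals the kernel G_M = {g ∈ G : ∀ m ∈ M, g • m = m}. Let H be a subgroup of G with G_M ⊆ H. Then the stabilizer of the element H • z := {h • z : h ∈ H} of P(P(P(M))) equals H. -/
open Pointwise MulAction

theorem MulAction.stabilizer_image_smul_eq_of_stabilizer_le {G α : Type*} [Group G]
    [MulAction G α] {a : α} {H : Subgroup G} (ha : stabilizer G a ≤ H) :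
    stabilizer G ((· • a) '' (H : Set G)) = H := by
  ext g
  rw [mem_stabilizer_iff]
  constructor
  · intro hg
    obtain ⟨h, hH, hha⟩ : g • a ∈ (· • a) '' (H : Set G) :=
      hg ▸ Set.smul_mem_smul_set ⟨1, H.one_mem, one_smul G a⟩
    have hstab : h⁻¹ * g ∈ H := ha (by rw [mem_stabilizer_iff, mul_smul, ← hha, inv_smul_smul])
    simpa using H.mul_mem hH hstab
  · intro hg
    rw [← Set.image_smul_comm _ g _ fun _ => mul_smul _ _ a, smul_coe_set hg]

theorem stabilizer_of_orbit_of_kernel_stabilized_point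
    {G : Type*} [Group G] (M : Type*) [MulAction G M]
    (z : Set (Set M))
    (hz : {g : G | g • z = z} = {g : G | ∀ m : M, g • m = m})
    (H : Subgroup G)
    (hH : {g : G | ∀ m : M, g • m = m} ⊆ (H : Set G)) :
    {g : G | g • ((fun h : G => h • z) '' (H : Set G)) = (fun h : G => h • z) '' (H : Set G)} =
      (H : Set G) := by
  have hstab : stabilizer G z ≤ H := fun g hg => hH (hz ▸ hg)
  exact congrArg SetLike.coe (stabilizer_image_smul_eq_of_stabilizer_le hstab)
end

section
/- Let G be a group, M a G-set, and X a transitive G-set (the action of G on X has exactly one orbit, X nonempty) such that the kernel G_M = {g ∈ G : ∀ m ∈ M, g • m = m} is contained in the kernel G_X = {g ∈ G : ∀ x ∈ X, g • x = x}. Then there exists an injective G-equivariant map from X into P(P(P(M))). -/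
/-!
Well-order `M`. If `g` permutes the closed initial segments, `g • Iic m = Iic (φ m)`, then `φ`
is strictly monotone, so `id ≤ φ` and `Iic m ⊆ g • Iic m`. Applied to `g⁻¹` as well, this gives
`g • Iic m = Iic m` for all `m`, whence `g • m ≤ m` and `g⁻¹ • m ≤ m`, so `g` fixes `M` pointwise.
Hence the stabilizer of `A = {Iic m | m : M} ∈ P(P(M))` lies in the stabilizer of any `x₀ : X`,
which is exactly what makes the equivariant map `x ↦ {g • A | g • x₀ = x}` injective.
-/

open Pointwise Set MulAction

section WellOrder

variable {G M : Type*} [Group G] [MulAction G M] [LinearOrder M] [WellFoundedLT M]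

lemma subset_smul_Iic_of_smul_range_Iic_eq {g : G}
    (hg : g • range (Iic : M → Set M) = range Iic) (m : M) : Iic m ⊆ g • Iic m := by
  have hφ : ∀ m : M, ∃ n, g • Iic m = Iic n := fun m => by
    obtain ⟨n, hn⟩ : g • Iic m ∈ range Iic := hg ▸ smul_mem_smul_set (mem_range_self m)
    exact ⟨n, hn.symm⟩
  choose φ hφ using hφ
  have hφ_mono : StrictMono φ := fun a b hab => by
    rw [← Iic_ssubset_Iic, ← hφ, ← hφ]
    exact (smul_set_subset_smul_set_iff.2 (Iic_subset_Iic.2 hab.le)).ssubset_of_ne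
      fun h => hab.ne (Iic_injective (smul_left_cancel g h))
  calc Iic m ⊆ Iic (φ m) := Iic_subset_Iic.2 (hφ_mono.id_le m)
    _ = g • Iic m := (hφ m).symm

lemma smul_le_of_smul_range_Iic_eq {g : G}
    (hg : g • range (Iic : M → Set M) = range Iic) (m : M) : g • m ≤ m := by
  have hg_inv : g⁻¹ • range (Iic : M → Set M) = range Iic := by rw [inv_smul_eq_iff, hg]
  have hsub : g • Iic m ⊆ Iic m :=
    smul_set_subset_iff_subset_inv_smul_set.2 (subset_smul_Iic_of_smul_range_Iic_eq hg_inv m)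
  exact hsub (smul_mem_smul_set self_mem_Iic)

lemma smul_eq_self_of_smul_range_Iic_eq {g : G}
    (hg : g • range (Iic : M → Set M) = range Iic) (m : M) : g • m = m := by
  have hg_inv : g⁻¹ • range (Iic : M → Set M) = range Iic := by rw [inv_smul_eq_iff, hg]
  refine le_antisymm (smul_le_of_smul_range_Iic_eq hg m) ?_
  simpa using smul_le_of_smul_range_Iic_eq hg_inv (g • m)

end WellOrder

theorem exists_set_set_fixed_only_by_kernel (G M : Type*) [Group G] [MulAction G M] :
    ∃ A : Set (Set M), ∀ g : G, g • A = A → ∀ m : M, g • m = m := by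
  obtain ⟨_, _⟩ := exists_wellFoundedLT M
  exact ⟨range Iic, fun _ hg => smul_eq_self_of_smul_range_Iic_eq hg⟩

namespace MulAction

variable (G) {X Y : Type*} [Group G] [MulAction G X] [MulAction G Y]

def cosetOrbit (x₀ : X) (a : Y) : X →[G] Set Y where
  toFun x := {y | ∃ g : G, g • x₀ = x ∧ g • a = y}
  map_smul' h x := by
    ext y
    simp only [id, mem_ofPred_eq, mem_smul_set]
    constructor
    · rintro ⟨g, hg, rfl⟩
      refine ⟨(h⁻¹ * g) • a, ⟨h⁻¹ * g, ?_, rfl⟩, by rw [smul_smul, mul_inv_cancel_left]⟩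
      rw [mul_smul, hg, inv_smul_smul]
    · rintro ⟨_, ⟨g, rfl, rfl⟩, rfl⟩
      exact ⟨h * g, mul_smul _ _ _, mul_smul _ _ _⟩

variable {G}

theorem cosetOrbit_injective [IsPretransitive G X] {x₀ : X} {a : Y}
    (h : stabilizer G a ≤ stabilizer G x₀) : Function.Injective (cosetOrbit G x₀ a) := by
  intro x y hxy
  obtain ⟨g, rfl⟩ := exists_smul_eq G x₀ x
  obtain ⟨g', rfl, hg'⟩ : g • a ∈ cosetOrbit G x₀ a y := hxy ▸ ⟨g, rfl, rfl⟩
  have hstab : g'⁻¹ * g ∈ stabilizer G x₀ :=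
    h (by rw [mem_stabilizer_iff, mul_smul, inv_smul_eq_iff, hg'])
  rwa [mem_stabilizer_iff, mul_smul, inv_smul_eq_iff] at hstab

end MulAction

theorem transitive_GSet_embeds_in_triple_power
    {G : Type*} [Group G] (M : Type*) [MulAction G M]
    (X : Type*) [MulAction G X] [Nonempty X] [MulAction.IsPretransitive G X]
    (hker : {g : G | ∀ m : M, g • m = m} ⊆ {g : G | ∀ x : X, g • x = x}) :
    ∃ f : X → Set (Set (Set M)),
      Function.Injective f ∧ ∀ (g : G) (x : X), f (g • x) = g • f x := by
  obtain ⟨x₀⟩ := ‹Nonempty X›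
  obtain ⟨A, hA⟩ := exists_set_set_fixed_only_by_kernel G M
  exact ⟨cosetOrbit G x₀ A, cosetOrbit_injective fun g hg => hker (hA g hg) x₀, map_smul _⟩
end

section
/- Let M be a type, n ≥ 1, and let R be the equivalence relation on P^{n+1}(M) given by x R y if and only if there exists a bijection f of M with y = P^{n+1}(f)(x). Then the cardinality of the quotient P^{n+1}(M)/R (the set of equivalence classes) is strictly greater than card P^n(M). -/
universe u

/-- `P^n(f)`: the `n`-fold application of the image (power set) functor to `f`. -/
def PowIterMap {M : Type u} (f : M → M) : ∀ n, PowIter M n → PowIter M n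
  | 0 => f
  | n + 1 => fun S => (PowIterMap f n '' (S : Set (PowIter M n)) : Set (PowIter M n))

theorem powIterMap_id (M : Type u) : ∀ n, PowIterMap (id : M → M) n = id
  | 0 => rfl
  | n + 1 => by
    funext S
    show PowIterMap (id : M → M) n '' S = S
    rw [powIterMap_id M n]; exact Set.image_id _

theorem powIterMap_comp {M : Type u} (f g : M → M) :
    ∀ n, PowIterMap (f ∘ g) n = PowIterMap f n ∘ PowIterMap g n
  | 0 => rfl
  | n + 1 => by
    funext S
    show PowIterMap (f ∘ g) n '' S = PowIterMap f n '' (PowIterMap g n '' S)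
    rw [powIterMap_comp f g n]; exact Set.image_comp _ _ _

theorem powIter_rel_equivalence (M : Type u) (n : ℕ) :
    Equivalence (fun x y : PowIter M n => ∃ f : Equiv.Perm M, y = PowIterMap (⇑f) n x) := by
  constructor
  · intro x
    refine ⟨Equiv.refl M, ?_⟩
    show x = PowIterMap (id : M → M) n x
    rw [powIterMap_id]; rfl
  · rintro x y ⟨f, rfl⟩
    refine ⟨f.symm, ?_⟩
    have : (⇑f.symm) ∘ (⇑f) = id := f.symm_comp_self
    calc x = PowIterMap (id : M → M) n x := by rw [powIterMap_id]; rfl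
    _ = PowIterMap ((⇑f.symm) ∘ (⇑f)) n x := by rw [this]
    _ = PowIterMap (⇑f.symm) n (PowIterMap (⇑f) n x) := by rw [powIterMap_comp]; rfl
  · rintro x y z ⟨f, rfl⟩ ⟨g, rfl⟩
    refine ⟨f.trans g, ?_⟩
    have : (⇑(f.trans g)) = (⇑g) ∘ (⇑f) := rfl
    rw [this, powIterMap_comp]; rfl

instance powIter_finite (M : Type u) [Finite M] : ∀ n, Finite (PowIter M n)
  | 0 => ‹Finite M›
  | n + 1 => by
    have := powIter_finite M n
    show Finite (Set (PowIter M n))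
    infer_instance

/-- `2 ^ |M| ≤ |P^n(M)|` for `n ≥ 1`. -/
theorem two_power_le_powIter (M : Type u) : ∀ n, 1 ≤ n →
    (2 : Cardinal) ^ Cardinal.mk M ≤ Cardinal.mk (PowIter M n)
  | 1, _ => by
    show (2 : Cardinal) ^ Cardinal.mk M ≤ Cardinal.mk (Set M)
    rw [Cardinal.mk_set]
  | n + 2, _ => by
    refine (two_power_le_powIter M (n + 1) (by omega)).trans ?_
    show Cardinal.mk (PowIter M (n + 1)) ≤ Cardinal.mk (Set (PowIter M (n + 1)))
    rw [Cardinal.mk_set]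
    exact (Cardinal.cantor _).le

theorem nat_aux1 : ∀ m : ℕ, 2 ^ m * (Nat.factorial m) < 2 ^ 2 ^ m := by
  intro m
  induction m with
  | zero => norm_num
  | succ m ih =>
    have h1 : 2 * (m + 1) ≤ 2 ^ 2 ^ m := by
      calc 2 * (m + 1) ≤ 2 * 2 ^ m := by
            have := Nat.lt_two_pow_self (n := m)
            omega
      _ = 2 ^ (m + 1) := by ring
      _ ≤ 2 ^ 2 ^ m := Nat.pow_le_pow_right (by norm_num) (Nat.lt_two_pow_self (n := m))
    calc 2 ^ (m + 1) * (Nat.factorial (m + 1)) = (2 * (m + 1)) * (2 ^ m * (Nat.factorial m)) := by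
          rw [Nat.factorial_succ]; ring
    _ < 2 ^ 2 ^ m * 2 ^ 2 ^ m := by
          exact Nat.mul_lt_mul_of_le_of_lt h1 ih (by positivity)
    _ = 2 ^ 2 ^ (m + 1) := by rw [← pow_add]; congr 1; ring
  
theorem nat_aux2 {m K : ℕ} (h : 2 ^ m ≤ K) : K * (Nat.factorial m) < 2 ^ K := by
  induction K, h using Nat.le_induction with
  | base => exact nat_aux1 m
  | succ K hK ih =>
    have hfact : (Nat.factorial m) ≤ 2 ^ K := by
      calc (Nat.factorial m) ≤ 2 ^ m * (Nat.factorial m) := Nat.le_mul_of_pos_left _ (by positivity)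
      _ ≤ 2 ^ 2 ^ m := (nat_aux1 m).le
      _ ≤ 2 ^ K := Nat.pow_le_pow_right (by norm_num) hK
    calc (K + 1) * (Nat.factorial m) = K * (Nat.factorial m) + (Nat.factorial m) := by ring
    _ < 2 ^ K + 2 ^ K := by omega
    _ = 2 ^ (K + 1) := by ring

theorem card_quotient_gt_card_powIter (M : Type u) (n : ℕ) (hn : 1 ≤ n) :
    Cardinal.mk
        (Quot (fun x y : PowIter M (n + 1) =>
          ∃ f : Equiv.Perm M, y = PowIterMap (⇑f) (n + 1) x)) >
      Cardinal.mk (PowIter M n) := by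
  set R := fun x y : PowIter M (n + 1) => ∃ f : Equiv.Perm M, y = PowIterMap (⇑f) (n + 1) x
    with hR
  set κ := Cardinal.mk (PowIter M n) with hκ
  by_contra hle
  push_neg at hle
  -- the map (class, permutation) ↦ image of a representative is surjective
  have hsurj : Function.Surjective
      (fun p : (Quot R) × Equiv.Perm M => PowIterMap (⇑p.2) (n + 1) p.1.out) := by
    intro x
    have hout : Quot.mk R (Quot.mk R x).out = Quot.mk R x := Quot.out_eq _
    have heqv : R (Quot.mk R x).out x :=
      ((powIter_rel_equivalence M (n + 1)).eqvGen_iff).mp (Quot.eqvGen_exact hout)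
    obtain ⟨f, hf⟩ := heqv
    exact ⟨⟨Quot.mk R x, f⟩, hf.symm⟩
  have h1 : Cardinal.mk (PowIter M (n + 1)) ≤
      Cardinal.mk (Quot R) * Cardinal.mk (Equiv.Perm M) := by
    refine (Cardinal.mk_le_of_surjective hsurj).trans ?_
    rw [Cardinal.mk_prod, Cardinal.lift_id, Cardinal.lift_id]
  have hpow : Cardinal.mk (PowIter M (n + 1)) = 2 ^ κ := by
    show Cardinal.mk (Set (PowIter M n)) = 2 ^ κ
    rw [Cardinal.mk_set]
  have h2 : (2 : Cardinal) ^ κ ≤ κ * Cardinal.mk (Equiv.Perm M) := by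
    rw [← hpow]
    exact h1.trans (mul_le_mul_left hle _)
  cases finite_or_infinite M with
  | inl hfin =>
    -- finite case: reduce to a natural number inequality
    classical
    letI := Fintype.ofFinite M
    letI : Fintype (PowIter M n) := Fintype.ofFinite _
    set m := Fintype.card M with hm
    set K := Fintype.card (PowIter M n) with hKdef
    have hκK : κ = (K : Cardinal) := by rw [hκ, Cardinal.mk_fintype]
    have hμ : Cardinal.mk (Equiv.Perm M) = ((Nat.factorial m : ℕ) : Cardinal) := by
      rw [Cardinal.mk_fintype, Fintype.card_perm]
    -- 2 ^ m ≤ K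
    have hmK : 2 ^ m ≤ K := by
      have h := two_power_le_powIter M n hn
      rw [← hκ, hκK, Cardinal.mk_fintype M, Cardinal.power_natCast] at h
      exact_mod_cast h
    have hcontr : (2 : ℕ) ^ K ≤ K * (Nat.factorial m) := by
      have h := h2
      rw [hκK, hμ, Cardinal.power_natCast] at h
      exact_mod_cast h
    exact absurd hcontr (not_le.mpr (nat_aux2 hmK))
  | inr hinf =>
    -- infinite case
    have hμ : Cardinal.mk (Equiv.Perm M) = 2 ^ Cardinal.mk M :=
      Cardinal.mk_perm_eq_two_power
    have hMκ : (2 : Cardinal) ^ Cardinal.mk M ≤ κ := two_power_le_powIter M n hn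
    have hκinf : Cardinal.aleph0 ≤ κ :=
      (Cardinal.aleph0_le_mk M).trans ((Cardinal.cantor _).le.trans hMκ)
    have : (2 : Cardinal) ^ κ ≤ κ := by
      calc (2 : Cardinal) ^ κ ≤ κ * Cardinal.mk (Equiv.Perm M) := h2
      _ ≤ κ * κ := mul_le_mul_right (hμ.le.trans hMκ) _
      _ = κ := Cardinal.mul_eq_self hκinf
    exact absurd this (not_le.mpr (Cardinal.cantor κ))
end

section
/- Let G be a group, M a G-set, and n ≥ 1. Then there exists a family, indexed by a set of cardinality card P^n(M), of pairwise disjoint G-invariant subsets of P^{n+4}(M), each of which, with its induced G-action, is isomorphic as a G-set (via a G-equivariant bijection) to P^3(M) = P(P(P(M))). -/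
open Pointwise

universe u v

section Aux

/-- Kuratowski pairs are injective. -/
lemma kpair_injective {W : Type*} {a b a' b' : W}
    (h : ({{a}, {a, b}} : Set (Set W)) = {{a'}, {a', b'}}) : a = a' ∧ b = b' := by
  rw [Set.pair_eq_pair_iff] at h
  rcases h with ⟨h1, h2⟩ | ⟨h1, h2⟩
  · have ha : a = a' := Set.singleton_eq_singleton_iff.1 h1
    subst ha
    rw [Set.pair_eq_pair_iff] at h2
    rcases h2 with ⟨-, hb⟩ | ⟨h3, h4⟩
    · exact ⟨rfl, hb⟩
    · exact ⟨rfl, h4.trans h3⟩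
  · -- h1 : {a} = {a', b'}, h2 : {a, b} = {a'}
    have ha : a = a' := by
      have : a ∈ ({a, b} : Set W) := by simp
      rw [h2] at this; simpa using this
    have hb : b = a' := by
      have : b ∈ ({a, b} : Set W) := by simp
      rw [h2] at this; simpa using this
    have hb' : b' = a := by
      have : b' ∈ ({a', b'} : Set W) := by simp
      rw [← h1] at this; simpa using this
    exact ⟨ha, by rw [hb, ← ha, ← hb']⟩

variable {G : Type v} [Group G] {Z : Type u}

/-- The collection of chains of subsets of `Z` of order type `α`. -/
def ChainOf (Z : Type u) (α : Ordinal.{u}) : Set (Set (Set Z)) :=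
  {x | Nonempty (↑x ≃o Set.Iio α)}

lemma chainOf_eq_of_mem {x : Set (Set Z)} {α β : Ordinal.{u}}
    (hα : x ∈ ChainOf Z α) (hβ : x ∈ ChainOf Z β) : α = β := by
  obtain ⟨e1⟩ := hα
  obtain ⟨e2⟩ := hβ
  have e : α.ToType ≃o β.ToType :=
    (Ordinal.ToType.mk (o := α)).symm.trans ((e1.symm.trans e2).trans (Ordinal.ToType.mk (o := β)))
  have h := (@Ordinal.type_eq _ _ _ _ isWellOrder_lt isWellOrder_lt).2 ⟨e.toRelIsoLT⟩
  rwa [Ordinal.type_toType, Ordinal.type_toType] at h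

lemma chainOf_image {x : Set (Set Z)} {α : Ordinal.{u}} (e : Set Z ≃o Set Z)
    (hx : x ∈ ChainOf Z α) : ⇑e '' x ∈ ChainOf Z α := by
  obtain ⟨i⟩ := hx
  have d : (↑x : Type u) ≃o ↑(⇑e '' x) :=
    { toEquiv := e.toEquiv.image x
      map_rel_iff' := by
        intro a b
        exact e.map_rel_iff }
  exact ⟨d.symm.trans i⟩

/-- The smul order iso on `Set Z`. -/
def smulOrderIso [MulAction G Z] (g : G) : Set Z ≃o Set Z where
  toEquiv := MulAction.toPerm g
  map_rel_iff' := Set.smul_set_subset_smul_set_iff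

lemma chainOf_smul [MulAction G Z] {x : Set (Set Z)} {α : Ordinal.{u}} (g : G)
    (hx : x ∈ ChainOf Z α) : g • x ∈ ChainOf Z α := by
  have hxe : g • x = ⇑(smulOrderIso (Z := Z) g) '' x := by
    rw [← Set.image_smul]; rfl
  rw [hxe]
  exact chainOf_image _ hx

lemma exists_chain (z : Z) :
    ∃ x : Set (Set Z), x ∈ ChainOf Z (Ordinal.typein WellOrderingRel z) := by
  set r : Z → Z → Prop := WellOrderingRel with hr
  set α : Ordinal.{u} := Ordinal.typein r z with hα
  let f : Set.Iio α → Set Z := fun β => {y | Ordinal.typein r y < β.1}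
  have hf : StrictMono f := by
    intro β γ hlt
    have hsub : f β ⊆ f γ := by
      intro y hy
      simp only [f, Set.mem_setOf_eq] at hy ⊢
      exact lt_trans hy (Subtype.coe_lt_coe.2 hlt)
    have hβt : (β : Ordinal) < Ordinal.type r :=
      lt_trans β.2 (Ordinal.typein_lt_type r z)
    obtain ⟨y, hy⟩ := Ordinal.typein_surj r hβt
    rw [Set.lt_iff_ssubset, Set.ssubset_iff_of_subset hsub]
    refine ⟨y, ?_, ?_⟩
    · show Ordinal.typein r y < (γ : Ordinal)
      rw [hy]; exact Subtype.coe_lt_coe.2 hlt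
    · show ¬ Ordinal.typein r y < (β : Ordinal)
      rw [hy]; exact lt_irrefl _
  exact ⟨Set.range f, ⟨(hf.orderIso f).symm⟩⟩

/-- The invariant label attached to a subset `S` of `Z`. -/
noncomputable def PhiSet (S : Set Z) : Set (Set (Set Z)) :=
  {x | ∃ z ∈ S, x ∈ ChainOf Z (Ordinal.typein WellOrderingRel z)}

lemma PhiSet_subset {S S' : Set Z} (h : PhiSet S ⊆ PhiSet S') : S ⊆ S' := by
  intro z hz
  obtain ⟨x, hx⟩ := exists_chain z
  obtain ⟨z', hz', hx'⟩ := h ⟨z, hz, hx⟩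
  have := chainOf_eq_of_mem hx hx'
  rw [Ordinal.typein_inj] at this
  subst this
  exact hz'

lemma PhiSet_injective : Function.Injective (PhiSet (Z := Z)) := by
  intro S S' h
  exact le_antisymm (PhiSet_subset h.le) (PhiSet_subset h.ge)

lemma PhiSet_smul [MulAction G Z] (g : G) (S : Set Z) : g • PhiSet S = PhiSet S := by
  have key : ∀ (g : G), g • PhiSet S ⊆ PhiSet S := by
    intro g x hx
    rw [Set.mem_smul_set] at hx
    obtain ⟨y, ⟨z, hz, hy⟩, rfl⟩ := hx
    exact ⟨z, hz, chainOf_smul g hy⟩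
  refine le_antisymm (key g) fun x hx => ?_
  rw [Set.mem_smul_set]
  exact ⟨g⁻¹ • x, key g⁻¹ (Set.smul_mem_smul_set hx), smul_inv_smul g x⟩

theorem main_abs {Z : Type u} [MulAction G Z] {P3 : Type u} [MulAction G P3]
    (σ : P3 → Set (Set (Set Z))) (hinj : Function.Injective σ)
    (hequiv : ∀ (g : G) (x : P3), σ (g • x) = g • σ x) :
    ∃ Y : Set Z → Set (Set (Set (Set (Set (Set Z))))),
      (∀ S S', S ≠ S' → Disjoint (Y S) (Y S')) ∧
      ∀ S, (∀ g : G, ∀ y ∈ Y S, g • y ∈ Y S) ∧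
        ∃ f : P3 → Set (Set (Set (Set (Set Z)))),
          Function.Injective f ∧ Set.range f = Y S ∧
          ∀ (g : G) (x : P3), f (g • x) = g • f x := by
  classical
  set F : Set Z → P3 → Set (Set (Set (Set (Set Z)))) :=
    fun S T => {{σ T}, {σ T, PhiSet S}} with hF
  have hFinj : ∀ {S T S' T'}, F S T = F S' T' → S = S' ∧ T = T' := by
    intro S T S' T' h
    obtain ⟨h1, h2⟩ := kpair_injective h
    exact ⟨PhiSet_injective h2, hinj h1⟩
  have hFequiv : ∀ (g : G) S T, g • F S T = F S (g • T) := by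
    intro g S T
    show g • ({{σ T}, {σ T, PhiSet S}} : Set (Set (Set (Set (Set Z))))) = _
    simp only [Set.smul_set_insert, Set.smul_set_singleton, PhiSet_smul, ← hequiv]
    rfl
  refine ⟨fun S => Set.range (F S), ?_, ?_⟩
  · intro S S' hne
    rw [Set.disjoint_left]
    rintro x ⟨T, rfl⟩ ⟨T', hT'⟩
    exact hne (hFinj hT').1.symm
  · intro S
    refine ⟨?_, F S, fun a b h => (hFinj h).2, rfl, fun g x => (hFequiv g S x).symm⟩
    rintro g y ⟨T, rfl⟩
    exact ⟨g • T, (hFequiv g S T).symm⟩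

end Aux

lemma exists_emb (G : Type v) [Group G] (M : Type u) [MulAction G M] :
    ∀ m : ℕ, ∃ σ : PowIter M 3 → PowIter M (m + 3),
      Function.Injective σ ∧ ∀ (g : G) (x : PowIter M 3), σ (g • x) = g • σ x
  | 0 => ⟨id, Function.injective_id, fun _ _ => rfl⟩
  | (m + 1) => by
    obtain ⟨σ, h1, h2⟩ := exists_emb G M m
    refine ⟨fun x => ({σ x} : Set (PowIter M (m + 3))), ?_, ?_⟩
    · intro a b h
      exact h1 (Set.singleton_eq_singleton_iff.1 h)
    · intro g x
      show ({σ (g • x)} : Set (PowIter M (m + 3))) = g • ({σ x} : Set (PowIter M (m + 3)))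
      rw [h2]
      exact (Set.smul_set_singleton).symm

theorem disjoint_copies_of_triple_power_in_powIter
    (G : Type v) [Group G] (M : Type u) [MulAction G M] (n : ℕ) (hn : 1 ≤ n) :
    ∃ (ι : Type u) (Y : ι → Set (PowIter M (n + 4))),
      Cardinal.mk ι = Cardinal.mk (PowIter M n) ∧
      (∀ i j : ι, i ≠ j → Disjoint (Y i) (Y j)) ∧
      ∀ i : ι,
        (∀ (g : G), ∀ y ∈ Y i, g • y ∈ Y i) ∧
        ∃ f : PowIter M 3 → PowIter M (n + 4),
          Function.Injective f ∧ Set.range f = Y i ∧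
          ∀ (g : G) (x : PowIter M 3), f (g • x) = g • f x := by
  obtain ⟨m, rfl⟩ : ∃ m, n = m + 1 := ⟨n - 1, (Nat.succ_pred_eq_of_pos hn).symm⟩
  obtain ⟨σ, h1, h2⟩ := exists_emb G M m
  obtain ⟨Y, hdis, hmain⟩ :=
    main_abs (G := G) (Z := PowIter M m) (P3 := PowIter M 3) σ h1 h2
  exact ⟨PowIter M (m + 1), Y, rfl, hdis, hmain⟩
end
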